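/- Let u : [0,∞) → H be differentiable with u(0) = f, suppose that for every t ≥ 0 there exists p(t) ∈ ∂J(u(t)) with u'(t) = -p(t), and suppose ‖u(t)‖ → 0 as t → ∞. Then the nonnegative function t ↦ J(u(t)) satisfies the Parseval-type identity ∫₀^∞ J(u(t)) dt = (1/2)‖f‖². -/

import Mathlib

open MeasureTheory Filter

/-- `p` is a subgradient of `J` at `u`: `J v ≥ J u + ⟨p, v - u⟩` for all `v`. -/
def IsSubgradientAt {H : Type*} [NormedAddCommGroup H] [InnerProductSpace ℝ H]
    (J : H → ℝ) (u p : H) : Prop :=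
  ∀ v : H, J v ≥ J u + (inner ℝ p (v - u) : ℝ)

/-! Euler's identity for a one-homogeneous `J` gives `⟪p, u⟫ = J u` for every `p ∈ ∂J(u)`, so along
the flow `d/dt (-½‖u t‖²) = ⟪p t, u t⟫ = J (u t) ≥ 0`; integrating this over `(0, ∞)` and using
`‖u t‖ → 0` yields `½‖f‖²`. -/

open scoped RealInnerProductSpace

section Homogeneous

variable {H : Type*} [NormedAddCommGroup H] [InnerProductSpace ℝ H]
  {J : H → ℝ} (hhom : ∀ (c : ℝ) (w : H), J (c • w) = |c| * J w)
include hhom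

theorem map_zero_of_abs_homogeneous : J 0 = 0 := by
  simpa using hhom 0 0

/-- Euler's identity: test the subgradient inequality at `v = 2 • u` and at `v = 0`. -/
theorem IsSubgradientAt.inner_eq_of_abs_homogeneous {u p : H} (h : IsSubgradientAt J u p) :
    ⟪p, u⟫ = J u := by
  have h_two := h ((2 : ℝ) • u)
  have h_zero := h 0
  rw [hhom, two_smul, add_sub_cancel_right] at h_two
  rw [map_zero_of_abs_homogeneous hhom, zero_sub, inner_neg_right] at h_zero
  norm_num at h_two
  linarith

theorem IsSubgradientAt.nonneg_of_abs_homogeneous {u p : H} (h : IsSubgradientAt J u p) :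
    0 ≤ J u := by
  have h_neg := h (-u)
  have h_euler := h.inner_eq_of_abs_homogeneous hhom
  have h_even : J (-u) = J u := by simpa using hhom (-1) u
  rw [h_even, show -u - u = (-2 : ℝ) • u by module, inner_smul_right, h_euler] at h_neg
  linarith

end Homogeneous

theorem integral_inner_eq_half_norm_sq_of_hasDerivAt_neg
    {H : Type*} [NormedAddCommGroup H] [InnerProductSpace ℝ H] {u p : ℝ → H}
    (hderiv : ∀ t, 0 ≤ t → HasDerivAt u (-p t) t) (hnonneg : ∀ t, 0 < t → 0 ≤ ⟪p t, u t⟫)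
    (hlim : Tendsto (fun t => ‖u t‖) atTop (nhds 0)) :
    ∫ t in Set.Ioi (0 : ℝ), ⟪p t, u t⟫ = (1 / 2) * ‖u 0‖ ^ 2 := by
  have hderiv_energy : ∀ t ∈ Set.Ici (0 : ℝ),
      HasDerivAt (fun s => -(1 / 2) * ‖u s‖ ^ 2) ⟪p t, u t⟫ t := by
    intro t ht
    refine ((hderiv t ht).norm_sq.const_mul (-(1 / 2) : ℝ)).congr_deriv ?_
    rw [inner_neg_right, real_inner_comm]
    ring
  have hlim_energy : Tendsto (fun s => -(1 / 2) * ‖u s‖ ^ 2) atTop (nhds 0) := by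
    simpa using (hlim.pow 2).const_mul (-(1 / 2) : ℝ)
  rw [integral_Ioi_of_hasDerivAt_of_nonneg' hderiv_energy hnonneg hlim_energy]
  ring

theorem parseval_gradientFlow_general
    {H : Type*} [NormedAddCommGroup H] [InnerProductSpace ℝ H]
    (J : H → ℝ)
    (hhom : ∀ (c : ℝ) (w : H), J (c • w) = |c| * J w)
    (f : H) (u p : ℝ → H) (hu0 : u 0 = f)
    (hflow : ∀ t : ℝ, 0 ≤ t →
      HasDerivAt u (-(p t)) t ∧ IsSubgradientAt J (u t) (p t))
    (hlim : Tendsto (fun t : ℝ => ‖u t‖) atTop (nhds 0)) :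
    ∫ t in Set.Ioi (0 : ℝ), J (u t) = (1 / 2) * ‖f‖ ^ 2 := by
  have heuler : ∀ t, 0 ≤ t → ⟪p t, u t⟫ = J (u t) := fun t ht =>
    (hflow t ht).2.inner_eq_of_abs_homogeneous hhom
  have hdissip := integral_inner_eq_half_norm_sq_of_hasDerivAt_neg (fun t ht => (hflow t ht).1)
    (fun t ht => heuler t ht.le ▸ (hflow t ht.le).2.nonneg_of_abs_homogeneous hhom) hlim
  rw [← hu0, ← hdissip]
  exact setIntegral_congr_fun measurableSet_Ioi fun t ht => (heuler t (le_of_lt ht)).symm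

/-- Parseval-type identity for the gradient flow of a convex absolutely
one-homogeneous functional: if `∂ₜ u(t) = -p(t)` with `p(t) ∈ ∂J(u(t))`,
`u(0) = f` and `‖u(t)‖ → 0` as `t → ∞`, then `∫₀^∞ J(u(t)) dt = ½‖f‖²`. -/
theorem parseval_gradientFlow
    {H : Type*} [NormedAddCommGroup H] [InnerProductSpace ℝ H] [CompleteSpace H]
    (J : H → ℝ) (hconv : ConvexOn ℝ Set.univ J)
    (hhom : ∀ (c : ℝ) (w : H), J (c • w) = |c| * J w)
    (f : H) (u p : ℝ → H) (hu0 : u 0 = f)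
    (hflow : ∀ t : ℝ, 0 ≤ t →
      HasDerivAt u (-(p t)) t ∧ IsSubgradientAt J (u t) (p t))
    (hlim : Tendsto (fun t : ℝ => ‖u t‖) atTop (nhds 0)) :
    ∫ t in Set.Ioi (0 : ℝ), J (u t) = (1 / 2) * ‖f‖ ^ 2 :=
  parseval_gradientFlow_general J hhom f u p hu0 hflow hlim
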